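/- In the pure exchange case (Δ = 0) with no double excitation, the rotating-coherence internal energies satisfy the exact consistency relation U_RC^A + U_RC^B = ⟨ψ|H|ψ⟩, provided ψ₀ψ_A ≠ 0 and ψ₀ψ_B ≠ 0. -/

import Mathlib

open Matrix Complex
open scoped Matrix Kronecker

noncomputable section

/-- Pauli X. -/
def σx : Matrix (Fin 2) (Fin 2) ℂ := !![0, 1; 1, 0]
/-- Pauli Y. -/
def σy : Matrix (Fin 2) (Fin 2) ℂ := !![0, -Complex.I; Complex.I, 0]
/-- Pauli Z (ground state `0` has eigenvalue -1, excited `1` has +1). -/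
def σz : Matrix (Fin 2) (Fin 2) ℂ := !![-1, 0; 0, 1]
/-- Raising operator `|1⟩⟨0|`. -/
def σp : Matrix (Fin 2) (Fin 2) ℂ := !![0, 0; 1, 0]
/-- Lowering operator `|0⟩⟨1|`. -/
def σm : Matrix (Fin 2) (Fin 2) ℂ := !![0, 1; 0, 0]
/-- Projector `|1⟩⟨1|`. -/
def e11 : Matrix (Fin 2) (Fin 2) ℂ := !![0, 0; 0, 1]

/-- Partial trace over the second factor. -/
def trB (M : Matrix (Fin 2 × Fin 2) (Fin 2 × Fin 2) ℂ) : Matrix (Fin 2) (Fin 2) ℂ :=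
  Matrix.of fun i j => ∑ k : Fin 2, M (i, k) (j, k)

/-- Partial trace over the first factor. -/
def trA (M : Matrix (Fin 2 × Fin 2) (Fin 2 × Fin 2) ℂ) : Matrix (Fin 2) (Fin 2) ℂ :=
  Matrix.of fun i j => ∑ k : Fin 2, M (k, i) (k, j)

/-- Excitation-number-conserving interaction Hamiltonian. -/
def Hnum (Λ : ℂ) (Δ : ℝ) : Matrix (Fin 2 × Fin 2) (Fin 2 × Fin 2) ℂ :=
  Λ • (σp ⊗ₖ σm) + (starRingEnd ℂ Λ) • (σm ⊗ₖ σp) + (Δ : ℂ) • (σz ⊗ₖ σz)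

/-- Total excitation number operator `N = |1⟩⟨1|⊗𝟙 + 𝟙⊗|1⟩⟨1|`. -/
def Nop : Matrix (Fin 2 × Fin 2) (Fin 2 × Fin 2) ℂ :=
  e11 ⊗ₖ (1 : Matrix (Fin 2) (Fin 2) ℂ) + (1 : Matrix (Fin 2) (Fin 2) ℂ) ⊗ₖ e11

/-- Bare qubit Hamiltonian `ω|1⟩⟨1|`. -/
def Hbare (ω : ℝ) : Matrix (Fin 2) (Fin 2) ℂ := !![0, 0; 0, (ω : ℂ)]

/-- Pure (rank-one) density matrix `|ψ⟩⟨ψ|`. -/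
def pureRho (ψ : Fin 2 × Fin 2 → ℂ) : Matrix (Fin 2 × Fin 2) (Fin 2 × Fin 2) ℂ :=
  Matrix.vecMulVec ψ (star ψ)

/-- Liouville–von Neumann derivative `ρ̇ = -i[H,ρ]`. -/
def rhodot (H ρ : Matrix (Fin 2 × Fin 2) (Fin 2 × Fin 2) ℂ) :
    Matrix (Fin 2 × Fin 2) (Fin 2 × Fin 2) ℂ :=
  -Complex.I • (H * ρ - ρ * H)

/-- The no-double-excitation state vector `ψ₀|00⟩ + ψ_B|01⟩ + ψ_A|10⟩`. -/
def ψvec (ψ0 ψB ψA : ℂ) : Fin 2 × Fin 2 → ℂ :=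
  fun p => !![ψ0, ψB; ψA, 0] p.1 p.2

/-- The total Hamiltonian `H_A⊗𝟙 + 𝟙⊗H_B + H^num_{Λ,Δ}`. -/
def Htot (ωA ωB : ℝ) (Λ : ℂ) (Δ : ℝ) : Matrix (Fin 2 × Fin 2) (Fin 2 × Fin 2) ℂ :=
  Hbare ωA ⊗ₖ (1 : Matrix (Fin 2) (Fin 2) ℂ) + (1 : Matrix (Fin 2) (Fin 2) ℂ) ⊗ₖ Hbare ωB
    + Hnum Λ Δ

/-- Rotating-coherence internal energy `U_RC = ρ₁₁ · Im(ρ̇₀₁/ρ₀₁)`. -/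
def URC (ρ ρd : Matrix (Fin 2) (Fin 2) ℂ) : ℝ :=
  (ρ 1 1).re * ((ρd 0 1) / (ρ 0 1)).im

open ComplexConjugate

/-! Write φ = Hψ. For Hermitian H the Liouville–von Neumann derivative of |ψ⟩⟨ψ| is
-i(|φ⟩⟨ψ| - |ψ⟩⟨φ|). With Δ = 0, H annihilates |00⟩ and preserves the single-excitation
sector, so φ = φ_B|01⟩ + φ_A|10⟩ and the coherences of the reduced states are
(ρ_A)₀₁ = ψ₀ψ̄_A, (ρ̇_A)₀₁ = iψ₀φ̄_A. Hence U_RC^A = |ψ_A|² Re(φ_A/ψ_A) = Re(ψ̄_A φ_A),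
likewise for B, and the sum is Re⟨ψ|φ⟩ = ⟨ψ|H|ψ⟩. -/

lemma Matrix.IsHermitian.kronecker {R l m : Type*} [CommSemiring R] [StarRing R]
    {A : Matrix l l R} {B : Matrix m m R} (hA : A.IsHermitian) (hB : B.IsHermitian) :
    (A ⊗ₖ B).IsHermitian := by
  rw [IsHermitian, conjTranspose_kronecker, hA.eq, hB.eq]

lemma trB_smul (r : ℂ) (M : Matrix (Fin 2 × Fin 2) (Fin 2 × Fin 2) ℂ) :
    trB (r • M) = r • trB M := by
  ext i j; simp [trB, mul_add]

lemma trA_smul (r : ℂ) (M : Matrix (Fin 2 × Fin 2) (Fin 2 × Fin 2) ℂ) :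
    trA (r • M) = r • trA M := by
  ext i j; simp [trA, mul_add]

lemma trB_sub (M N : Matrix (Fin 2 × Fin 2) (Fin 2 × Fin 2) ℂ) :
    trB (M - N) = trB M - trB N := by
  ext i j; simp [trB]

lemma trA_sub (M N : Matrix (Fin 2 × Fin 2) (Fin 2 × Fin 2) ℂ) :
    trA (M - N) = trA M - trA N := by
  ext i j; simp [trA]

lemma trB_vecMulVec_ψvec (a b c a' b' c' : ℂ) :
    trB (vecMulVec (ψvec a b c) (star (ψvec a' b' c'))) =
      !![a * conj a' + b * conj b', a * conj c'; c * conj a', c * conj c'] := by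
  ext i j; fin_cases i <;> fin_cases j <;> simp [trB, ψvec, vecMulVec_apply]

lemma trA_vecMulVec_ψvec (a b c a' b' c' : ℂ) :
    trA (vecMulVec (ψvec a b c) (star (ψvec a' b' c'))) =
      !![a * conj a' + c * conj c', a * conj b'; b * conj a', b * conj b'] := by
  ext i j; fin_cases i <;> fin_cases j <;> simp [trA, ψvec, vecMulVec_apply]

lemma star_ψvec_dotProduct_ψvec (a b c a' b' c' : ℂ) :
    star (ψvec a b c) ⬝ᵥ ψvec a' b' c' = conj a * a' + conj b * b' + conj c * c' := by
  simp [dotProduct, ψvec, Fintype.sum_prod_type]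

lemma Hbare_isHermitian (ω : ℝ) : (Hbare ω).IsHermitian := by
  ext i j; fin_cases i <;> fin_cases j <;> simp [Hbare]

lemma σp_conjTranspose : σpᴴ = σm := by
  ext i j; fin_cases i <;> fin_cases j <;> simp [σp, σm]

lemma σz_isHermitian : σz.IsHermitian := by
  ext i j; fin_cases i <;> fin_cases j <;> simp [σz]

lemma Hnum_isHermitian (Λ : ℂ) (Δ : ℝ) : (Hnum Λ Δ).IsHermitian := by
  have hm : σmᴴ = σp := by rw [← σp_conjTranspose, conjTranspose_conjTranspose]
  simp [IsHermitian, Hnum, conjTranspose_kronecker, σp_conjTranspose, hm,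
    σz_isHermitian.eq, add_comm]

lemma Htot_isHermitian (ωA ωB : ℝ) (Λ : ℂ) (Δ : ℝ) : (Htot ωA ωB Λ Δ).IsHermitian :=
  (((Hbare_isHermitian ωA).kronecker isHermitian_one).add
    ((isHermitian_one).kronecker (Hbare_isHermitian ωB))).add (Hnum_isHermitian Λ Δ)

lemma rhodot_pureRho {H : Matrix (Fin 2 × Fin 2) (Fin 2 × Fin 2) ℂ} (hH : H.IsHermitian)
    (ψ : Fin 2 × Fin 2 → ℂ) :
    rhodot H (pureRho ψ) =
      -I • (vecMulVec (H *ᵥ ψ) (star ψ) - vecMulVec ψ (star (H *ᵥ ψ))) := by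
  rw [rhodot, pureRho, mul_vecMulVec, vecMulVec_mul, star_mulVec, hH.eq]

lemma Htot_mulVec_ψvec (ωA ωB : ℝ) (Λ ψ0 ψB ψA : ℂ) :
    Htot ωA ωB Λ 0 *ᵥ ψvec ψ0 ψB ψA =
      ψvec 0 (ωB * ψB + conj Λ * ψA) (ωA * ψA + Λ * ψB) := by
  ext ⟨i, j⟩; fin_cases i <;> fin_cases j <;>
    simp [Htot, Hnum, Hbare, σp, σm, σz, ψvec, mulVec, dotProduct, Fintype.sum_prod_type,
      one_apply]
  ring

lemma URC_eq_re_conj_mul {ρ ρd : Matrix (Fin 2) (Fin 2) ℂ} {a b c : ℂ} (ha : a ≠ 0) (hb : b ≠ 0)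
    (h11 : ρ 1 1 = b * conj b) (h01 : ρ 0 1 = a * conj b) (hd01 : ρd 0 1 = I * (a * conj c)) :
    URC ρ ρd = (conj b * c).re := by
  have hb' : conj b ≠ 0 := by simpa using hb
  have hratio : ρd 0 1 / ρ 0 1 = I * conj (c / b) := by
    rw [hd01, h01, map_div₀]; field_simp
  have hconj : conj b * c = (normSq b : ℂ) * (c / b) := by
    rw [← mul_conj]; field_simp
  rw [URC, hratio, h11, mul_conj, I_mul_im, conj_re, ofReal_re, hconj, re_ofReal_mul]

theorem stmt_16_general (ψ0 ψA ψB Λ : ℂ) (ωA ωB : ℝ)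
    (hA : ψ0 * ψA ≠ 0) (hB : ψ0 * ψB ≠ 0) :
    URC (trB (pureRho (ψvec ψ0 ψB ψA)))
        (trB (rhodot (Htot ωA ωB Λ 0) (pureRho (ψvec ψ0 ψB ψA))))
      + URC (trA (pureRho (ψvec ψ0 ψB ψA)))
        (trA (rhodot (Htot ωA ωB Λ 0) (pureRho (ψvec ψ0 ψB ψA))))
      = (star (ψvec ψ0 ψB ψA) ⬝ᵥ (Htot ωA ωB Λ 0).mulVec (ψvec ψ0 ψB ψA)).re := by
  obtain ⟨h0, hA⟩ := mul_ne_zero_iff.mp hA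
  obtain ⟨-, hB⟩ := mul_ne_zero_iff.mp hB
  rw [rhodot_pureRho (Htot_isHermitian ωA ωB Λ 0), Htot_mulVec_ψvec, pureRho]
  simp only [trB_smul, trB_sub, trA_smul, trA_sub, trB_vecMulVec_ψvec, trA_vecMulVec_ψvec,
    star_ψvec_dotProduct_ψvec]
  rw [URC_eq_re_conj_mul (c := ωA * ψA + Λ * ψB) h0 hA (by simp) (by simp) (by simp),
    URC_eq_re_conj_mul (c := ωB * ψB + conj Λ * ψA) h0 hB (by simp) (by simp) (by simp)]
  simp only [mul_zero, zero_add, add_re]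
  ring

/-- Pure exchange case (`Δ = 0`): exact consistency `U_RC^A + U_RC^B = ⟨ψ|H|ψ⟩`. -/
theorem stmt_16 (ψ0 ψA ψB Λ : ℂ) (ωA ωB : ℝ)
    (hnorm : Complex.normSq ψ0 + Complex.normSq ψA + Complex.normSq ψB = 1)
    (hA : ψ0 * ψA ≠ 0) (hB : ψ0 * ψB ≠ 0) :
    URC (trB (pureRho (ψvec ψ0 ψB ψA)))
        (trB (rhodot (Htot ωA ωB Λ 0) (pureRho (ψvec ψ0 ψB ψA))))
      + URC (trA (pureRho (ψvec ψ0 ψB ψA)))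
        (trA (rhodot (Htot ωA ωB Λ 0) (pureRho (ψvec ψ0 ψB ψA))))
      = (star (ψvec ψ0 ψB ψA) ⬝ᵥ (Htot ωA ωB Λ 0).mulVec (ψvec ψ0 ψB ψA)).re :=
  stmt_16_general ψ0 ψA ψB Λ ωA ωB hA hB
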